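/- Let Δ ⊆ ℝ_{≥0}^n be a compact convex set contained in {x : x_2+⋯+x_n ≤ x_1 ≤ μ} and containing the origin with positive volume. Define ξ̃(Δ) := sup{ξ ≥ 0 : the inverted standard simplex of size ξ is contained in Δ}. Then ξ̃(Δ) = inf{t ≥ 0 : vol(Δ_{x_1 ≤ t}) < t^n/n!}. -/

import Mathlib

open MeasureTheory

section Aux

lemma stdSet_meas (n : ℕ) (t : ℝ) :
    MeasurableSet {y : Fin n → ℝ | (∀ i, 0 ≤ y i) ∧ ∑ i, y i ≤ t} := by
  have : {y : Fin n → ℝ | (∀ i, 0 ≤ y i) ∧ ∑ i, y i ≤ t}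
      = (⋂ i, {y : Fin n → ℝ | 0 ≤ y i}) ∩ {y | ∑ i, y i ≤ t} := by
    ext y; simp [Set.mem_iInter]
  rw [this]
  exact (MeasurableSet.iInter fun i =>
      measurableSet_le measurable_const (measurable_pi_apply i)).inter
    (measurableSet_le (Finset.measurable_sum _ fun i _ => measurable_pi_apply i) measurable_const)

lemma sum_ne_zero_eq (n : ℕ) [NeZero n] (x : Fin n → ℝ) :
    (∑ i ∈ Finset.univ.filter (fun i : Fin n => i ≠ 0), x i) = (∑ i, x i) - x 0 := by
  rw [Finset.filter_ne', eq_sub_iff_add_eq, Finset.sum_erase_add _ _ (Finset.mem_univ 0)]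

noncomputable def Lmap (n : ℕ) [NeZero n] : (Fin n → ℝ) →ₗ[ℝ] (Fin n → ℝ) where
  toFun y := fun i => if i = 0 then ∑ j, y j else y i
  map_add' y z := by
    funext i
    by_cases h : i = 0 <;> simp [h, Finset.sum_add_distrib]
  map_smul' c y := by
    funext i
    by_cases h : i = 0 <;> simp [h, Finset.mul_sum]

lemma Lmap_det (n : ℕ) [NeZero n] : LinearMap.det (Lmap n) = 1 := by
  rw [← LinearMap.det_toMatrix', Matrix.det_of_upperTriangular]
  · rw [Finset.prod_eq_one]
    intro i _
    rw [LinearMap.toMatrix'_apply]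
    by_cases h : i = 0 <;> simp [Lmap, h]
  · intro i j hji
    rw [LinearMap.toMatrix'_apply]
    have hji' : j < i := hji
    have hi : i ≠ 0 := by
      rintro rfl
      exact (show (0 : Fin n) ≤ j from Fin.zero_le j).not_gt hji'
    have hij : ¬ (i = j) := fun h => absurd hji (by simp [h])
    simp [Lmap, hi, hij]

lemma Lmap_image (n : ℕ) [NeZero n] (t : ℝ) :
    Lmap n '' {y : Fin n → ℝ | (∀ i, 0 ≤ y i) ∧ ∑ i, y i ≤ t}
      = {x : Fin n → ℝ | (∀ i, 0 ≤ x i) ∧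
          (∑ i ∈ Finset.univ.filter (fun i : Fin n => i ≠ 0), x i) ≤ x 0 ∧ x 0 ≤ t} := by
  ext x
  simp only [Set.mem_image, Set.mem_setOf_eq]
  constructor
  · rintro ⟨y, ⟨hy, hsum⟩, rfl⟩
    have h0 : (Lmap n y) 0 = ∑ j, y j := by simp [Lmap]
    have hne : ∀ i : Fin n, i ≠ 0 → (Lmap n y) i = y i := fun i hi => by simp [Lmap, hi]
    refine ⟨?_, ?_, ?_⟩
    · intro i
      by_cases h : i = 0
      · rw [h, h0]; exact Finset.sum_nonneg fun j _ => hy j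
      · rw [hne i h]; exact hy i
    · have heq : (∑ i ∈ Finset.univ.filter (fun i : Fin n => i ≠ 0), (Lmap n y) i)
          = ∑ i ∈ Finset.univ.filter (fun i : Fin n => i ≠ 0), y i := by
        apply Finset.sum_congr rfl
        intro i hi
        exact hne i (by simpa using hi)
      rw [heq, h0, sum_ne_zero_eq]
      linarith [hy 0]
    · rw [h0]; exact hsum
  · rintro ⟨hx, hsum, hxt⟩
    set s := ∑ j ∈ Finset.univ.filter (fun j : Fin n => j ≠ 0), x j with hs
    have hsumy : (∑ j, (fun i : Fin n => if i = 0 then x 0 - s else x i) j) = x 0 := by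
      rw [← Finset.sum_erase_add _ _ (Finset.mem_univ (0 : Fin n))]
      simp only [if_pos rfl]
      have herase : (∑ j ∈ Finset.univ.erase (0 : Fin n),
          (if j = 0 then x 0 - s else x j)) = s := by
        rw [hs, Finset.filter_ne']
        apply Finset.sum_congr rfl
        intro j hj
        rw [if_neg (Finset.ne_of_mem_erase hj)]
      rw [herase]; simp
    refine ⟨fun i => if i = 0 then x 0 - s else x i, ⟨?_, ?_⟩, ?_⟩
    · intro i
      by_cases h : i = 0 <;> simp [h, sub_nonneg, hsum, hx i]
    · rw [hsumy]; exact hxt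
    · funext i
      by_cases h : i = 0
      · subst h
        simp only [Lmap, LinearMap.coe_mk, AddHom.coe_mk, if_pos rfl]
        exact hsumy
      · simp only [Lmap, LinearMap.coe_mk, AddHom.coe_mk, if_neg h]

lemma vol_stdSet (n : ℕ) : ∀ t : ℝ, 0 ≤ t →
    volume {y : Fin n → ℝ | (∀ i, 0 ≤ y i) ∧ ∑ i, y i ≤ t}
      = ENNReal.ofReal (t ^ n / n.factorial) := by
  induction n with
  | zero =>
    intro t ht
    have h : {y : Fin 0 → ℝ | (∀ i, 0 ≤ y i) ∧ ∑ i, y i ≤ t} = Set.univ := by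
      ext y; simp [ht]
    rw [h, MeasureTheory.volume_pi]
    simp [Measure.pi_univ, ENNReal.ofReal_one]
  | succ m ih =>
    intro t ht
    have hmp := (measurePreserving_piFinSuccAbove (fun _ : Fin (m+1) => (volume : Measure ℝ)) 0).symm
    set S : Set (Fin (m+1) → ℝ) := {y | (∀ i, 0 ≤ y i) ∧ ∑ i, y i ≤ t} with hS
    have hSm : MeasurableSet S := stdSet_meas (m+1) t
    have h1 : volume S = (volume.prod volume)
        ((MeasurableEquiv.piFinSuccAbove (fun _ : Fin (m+1) => ℝ) 0).symm ⁻¹' S) := by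
      rw [MeasureTheory.volume_pi] at *
      exact (hmp.measure_preimage hSm.nullMeasurableSet).symm
    have h2 : ((MeasurableEquiv.piFinSuccAbove (fun _ : Fin (m+1) => ℝ) 0).symm ⁻¹' S)
        = {p : ℝ × (Fin m → ℝ) | 0 ≤ p.1 ∧ (∀ j, 0 ≤ p.2 j) ∧ p.1 + ∑ j, p.2 j ≤ t} := by
      ext ⟨a, y⟩
      have he : (MeasurableEquiv.piFinSuccAbove (fun _ : Fin (m+1) => ℝ) 0).symm (a, y)
          = Fin.insertNth 0 a y := rfl
      simp only [Set.mem_preimage, he, hS, Set.mem_setOf_eq]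
      constructor
      · rintro ⟨hpos, hsum⟩
        refine ⟨by simpa using hpos 0, fun j => by simpa using hpos ((0 : Fin (m+1)).succAbove j), ?_⟩
        rwa [Fin.sum_univ_succAbove _ 0, Fin.insertNth_apply_same] at hsum
      · rintro ⟨ha, hy, hsum⟩
        constructor
        · rw [Fin.forall_iff_succAbove 0]
          exact ⟨by simpa using ha, fun j => by simpa using hy j⟩
        · rw [Fin.sum_univ_succAbove _ 0, Fin.insertNth_apply_same]
          simpa using hsum
    set P : Set (ℝ × (Fin m → ℝ)) :=
      {p | 0 ≤ p.1 ∧ (∀ j, 0 ≤ p.2 j) ∧ p.1 + ∑ j, p.2 j ≤ t} with hP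
    have hPm : MeasurableSet P := by
      have : P = ({p : ℝ × (Fin m → ℝ) | 0 ≤ p.1} ∩ (⋂ j, {p : ℝ × (Fin m → ℝ) | 0 ≤ p.2 j})
          ∩ {p : ℝ × (Fin m → ℝ) | p.1 + ∑ j, p.2 j ≤ t}) := by
        ext p; simp [hP, Set.mem_iInter, and_assoc]
      rw [this]
      refine (MeasurableSet.inter (MeasurableSet.inter ?_ ?_) ?_)
      · exact measurableSet_le measurable_const measurable_fst
      · exact MeasurableSet.iInter fun j =>
          measurableSet_le measurable_const (by fun_prop)
      · refine measurableSet_le ?_ measurable_const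
        fun_prop
    rw [h1, h2, Measure.prod_apply hPm]
    have hslice : ∀ a : ℝ, volume (Prod.mk a ⁻¹' P)
        = Set.indicator (Set.Icc 0 t)
            (fun a => ENNReal.ofReal ((t - a) ^ m / m.factorial)) a := by
      intro a
      by_cases ha : a ∈ Set.Icc (0:ℝ) t
      · rw [Set.indicator_of_mem ha]
        obtain ⟨ha0, hat⟩ := ha
        have : Prod.mk a ⁻¹' P = {y : Fin m → ℝ | (∀ j, 0 ≤ y j) ∧ ∑ j, y j ≤ t - a} := by
          ext y
          simp only [Set.mem_preimage, hP, Set.mem_setOf_eq]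
          constructor
          · rintro ⟨_, hy, hs⟩; exact ⟨hy, by linarith⟩
          · rintro ⟨hy, hs⟩; exact ⟨ha0, hy, by linarith⟩
        rw [this, ih (t - a) (by linarith)]
      · rw [Set.indicator_of_notMem ha]
        have : Prod.mk a ⁻¹' P = ∅ := by
          ext y
          simp only [Set.mem_preimage, hP, Set.mem_setOf_eq, Set.mem_empty_iff_false, iff_false]
          rintro ⟨ha0, hy, hs⟩
          have : 0 ≤ ∑ j, y j := Finset.sum_nonneg fun j _ => hy j
          exact ha ⟨ha0, by linarith⟩
        rw [this, measure_empty]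
    rw [lintegral_congr hslice, lintegral_indicator measurableSet_Icc]
    have hcont : Continuous (fun a : ℝ => (t - a) ^ m / m.factorial) := by continuity
    rw [← MeasureTheory.ofReal_integral_eq_lintegral_ofReal
        (hcont.integrableOn_Icc)
        ((ae_restrict_iff' measurableSet_Icc).2 (Filter.Eventually.of_forall fun a ha => by
          have : 0 ≤ t - a := by linarith [ha.2]
          positivity))]
    congr 1
    rw [MeasureTheory.integral_Icc_eq_integral_Ioc, ← intervalIntegral.integral_of_le ht]
    have hcs := intervalIntegral.integral_comp_sub_left
      (a := 0) (b := t) (fun u : ℝ => u ^ m / m.factorial) t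
    rw [hcs]
    simp only [sub_self, sub_zero]
    rw [intervalIntegral.integral_div, integral_pow]
    have hfac : ((m+1).factorial : ℝ) = (m+1) * m.factorial := by
      rw [Nat.factorial_succ]; push_cast; ring
    rw [hfac]
    have h1 : ((m:ℝ)+1) ≠ 0 := by positivity
    have h2 : (m.factorial : ℝ) ≠ 0 := by positivity
    field_simp
    simp

lemma vol_invSimp (n : ℕ) [NeZero n] (t : ℝ) (ht : 0 ≤ t) :
    volume {x : Fin n → ℝ | (∀ i, 0 ≤ x i) ∧
        (∑ i ∈ Finset.univ.filter (fun i : Fin n => i ≠ 0), x i) ≤ x 0 ∧ x 0 ≤ t}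
      = ENNReal.ofReal (t ^ n / n.factorial) := by
  rw [← Lmap_image, Measure.addHaar_image_linearMap, Lmap_det, vol_stdSet n t ht]
  simp

lemma invSimp_closed (n : ℕ) [NeZero n] (t : ℝ) :
    IsClosed {x : Fin n → ℝ | (∀ i, 0 ≤ x i) ∧
        (∑ i ∈ Finset.univ.filter (fun i : Fin n => i ≠ 0), x i) ≤ x 0 ∧ x 0 ≤ t} := by
  have : {x : Fin n → ℝ | (∀ i, 0 ≤ x i) ∧
        (∑ i ∈ Finset.univ.filter (fun i : Fin n => i ≠ 0), x i) ≤ x 0 ∧ x 0 ≤ t}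
      = (⋂ i, {x : Fin n → ℝ | 0 ≤ x i}) ∩
        ({x : Fin n → ℝ | (∑ i ∈ Finset.univ.filter (fun i : Fin n => i ≠ 0), x i) ≤ x 0}
          ∩ {x : Fin n → ℝ | x 0 ≤ t}) := by
    ext x; simp [Set.mem_iInter, and_assoc]
  rw [this]
  refine ((isClosed_iInter fun i =>
      isClosed_le continuous_const (continuous_apply i))).inter (IsClosed.inter ?_ ?_)
  · exact isClosed_le (by fun_prop) (continuous_apply 0)
  · exact isClosed_le (continuous_apply 0) continuous_const

lemma invSimp_convex (n : ℕ) [NeZero n] (t : ℝ) :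
    Convex ℝ {x : Fin n → ℝ | (∀ i, 0 ≤ x i) ∧
        (∑ i ∈ Finset.univ.filter (fun i : Fin n => i ≠ 0), x i) ≤ x 0 ∧ x 0 ≤ t} := by
  rintro x ⟨hx, hsx, hxt⟩ y ⟨hy, hsy, hyt⟩ a b ha hb hab
  have hcoord : ∀ i, (a • x + b • y) i = a * x i + b * y i := fun i => by
    simp [Pi.smul_apply, smul_eq_mul]
  refine ⟨fun i => ?_, ?_, ?_⟩
  · rw [hcoord i]
    exact add_nonneg (mul_nonneg ha (hx i)) (mul_nonneg hb (hy i))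
  · have : (∑ i ∈ Finset.univ.filter (fun i : Fin n => i ≠ 0), (a • x + b • y) i)
        = a * (∑ i ∈ Finset.univ.filter (fun i : Fin n => i ≠ 0), x i)
          + b * (∑ i ∈ Finset.univ.filter (fun i : Fin n => i ≠ 0), y i) := by
      rw [Finset.mul_sum, Finset.mul_sum, ← Finset.sum_add_distrib]
      exact Finset.sum_congr rfl fun i _ => hcoord i
    rw [this, hcoord 0]
    have h1 : a * (∑ i ∈ Finset.univ.filter (fun i : Fin n => i ≠ 0), x i) ≤ a * x 0 :=
      mul_le_mul_of_nonneg_left hsx ha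
    have h2 : b * (∑ i ∈ Finset.univ.filter (fun i : Fin n => i ≠ 0), y i) ≤ b * y 0 :=
      mul_le_mul_of_nonneg_left hsy hb
    linarith
  · rw [hcoord 0]
    have h1 : a * x 0 ≤ a * t := mul_le_mul_of_nonneg_left hxt ha
    have h2 : b * y 0 ≤ b * t := mul_le_mul_of_nonneg_left hyt hb
    calc a * x 0 + b * y 0 ≤ a * t + b * t := add_le_add h1 h2
      _ = (a + b) * t := by ring
      _ = t := by rw [hab, one_mul]

lemma invSimp_interior_nonempty (n : ℕ) [NeZero n] {t : ℝ} (ht : 0 < t) :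
    (interior {x : Fin n → ℝ | (∀ i, 0 ≤ x i) ∧
        (∑ i ∈ Finset.univ.filter (fun i : Fin n => i ≠ 0), x i) ≤ x 0 ∧ x 0 ≤ t}).Nonempty := by
  have hn : 0 < (n : ℝ) := Nat.cast_pos.mpr (Nat.pos_of_ne_zero (NeZero.ne n))
  set O : Set (Fin n → ℝ) := {x | (∀ i, 0 < x i) ∧
      (∑ i ∈ Finset.univ.filter (fun i : Fin n => i ≠ 0), x i) < x 0 ∧ x 0 < t} with hO
  have hOopen : IsOpen O := by
    have : O = (⋂ i, {x : Fin n → ℝ | 0 < x i}) ∩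
        ({x : Fin n → ℝ | (∑ i ∈ Finset.univ.filter (fun i : Fin n => i ≠ 0), x i) < x 0}
          ∩ {x : Fin n → ℝ | x 0 < t}) := by
      ext x; simp [hO, Set.mem_iInter, and_assoc]
    rw [this]
    refine ((isOpen_iInter_of_finite fun i =>
        isOpen_lt continuous_const (continuous_apply i))).inter (IsOpen.inter ?_ ?_)
    · exact isOpen_lt (by fun_prop) (continuous_apply 0)
    · exact isOpen_lt (continuous_apply 0) continuous_const
  have hOsub : O ⊆ {x : Fin n → ℝ | (∀ i, 0 ≤ x i) ∧
      (∑ i ∈ Finset.univ.filter (fun i : Fin n => i ≠ 0), x i) ≤ x 0 ∧ x 0 ≤ t} := by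
    rintro x ⟨h1, h2, h3⟩
    exact ⟨fun i => (h1 i).le, h2.le, h3.le⟩
  set z : Fin n → ℝ := fun i => if i = 0 then t/2 else t/(4*n) with hzdef
  have hz0 : z 0 = t/2 := by simp [hzdef]
  have hzne : ∀ i ∈ Finset.univ.filter (fun i : Fin n => i ≠ 0), z i = t/(4*n) := by
    intro i hi
    simp only [Finset.mem_filter] at hi
    simp [hzdef, hi.2]
  have hz : z ∈ O := by
    refine ⟨fun i => ?_, ?_, ?_⟩
    · by_cases h : i = 0
      · have : z i = t/2 := by simp [hzdef, h]
        rw [this]; positivity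
      · have : z i = t/(4*n) := by simp [hzdef, h]
        rw [this]; positivity
    · have hconst : (∑ i ∈ Finset.univ.filter (fun i : Fin n => i ≠ 0), z i)
          = (Finset.univ.filter (fun i : Fin n => i ≠ 0)).card * (t/(4*n)) := by
        rw [Finset.sum_congr rfl hzne, Finset.sum_const, nsmul_eq_mul]
      rw [hconst, hz0]
      have hcard : ((Finset.univ.filter (fun i : Fin n => i ≠ 0)).card : ℝ) ≤ n := by
        exact_mod_cast (Finset.card_filter_le _ _).trans (by simp)
      have hpos : 0 ≤ t/(4*n) := by positivity
      have h1 : ((Finset.univ.filter (fun i : Fin n => i ≠ 0)).card : ℝ) * (t/(4*n))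
          ≤ n * (t/(4*n)) := mul_le_mul_of_nonneg_right hcard hpos
      have h2 : (n : ℝ) * (t/(4*n)) = t/4 := by field_simp
      rw [h2] at h1
      calc ((Finset.univ.filter (fun i : Fin n => i ≠ 0)).card : ℝ) * (t/(4*n))
          ≤ t/4 := h1
        _ < t/2 := by linarith
    · rw [hz0]; linarith
  exact ⟨z, interior_maximal hOsub hOopen hz⟩

lemma mem_of_combo_mem {n : ℕ} {Δ : Set (Fin n → ℝ)} (hΔ : IsClosed Δ) {x y : Fin n → ℝ}
    (h : ∀ k : ℕ, ((1:ℝ)/(k+1)) • y + (1 - (1:ℝ)/(k+1)) • x ∈ Δ) : x ∈ Δ := by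
  have h0 : Filter.Tendsto (fun k : ℕ => (1:ℝ)/(k+1)) Filter.atTop (nhds 0) :=
    tendsto_one_div_add_atTop_nhds_zero_nat
  have ht1 : Filter.Tendsto (fun k : ℕ => (1:ℝ) - 1/(k+1)) Filter.atTop (nhds 1) := by
    have := (tendsto_const_nhds : Filter.Tendsto (fun _ : ℕ => (1:ℝ)) Filter.atTop (nhds 1)).sub h0
    simpa using this
  have ht : Filter.Tendsto (fun k : ℕ => ((1:ℝ)/(k+1)) • y + (1 - (1:ℝ)/(k+1)) • x)
      Filter.atTop (nhds x) := by
    have := (h0.smul_const y).add (ht1.smul_const x)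
    simpa using this
  exact hΔ.mem_of_tendsto ht (Filter.Eventually.of_forall h)

end Aux

/-- The largest size of an inverted standard simplex contained in `Δ` equals the infimum of
`t ≥ 0` with `vol(Δ_{x₁ ≤ t}) < t^n/n!`. -/
theorem stmt10 (n : ℕ) [NeZero n] (μ : ℝ) (hμ : 0 < μ) (Δ : Set (Fin n → ℝ))
    (hc : IsCompact Δ) (hconv : Convex ℝ Δ)
    (hsub : Δ ⊆ {x : Fin n → ℝ | (∀ i, 0 ≤ x i) ∧
      (∑ i ∈ Finset.univ.filter (fun i : Fin n => i ≠ 0), x i) ≤ x 0 ∧ x 0 ≤ μ})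
    (h0 : (0 : Fin n → ℝ) ∈ Δ) (hvol : 0 < volume Δ) :
    sSup {ξ : ℝ | 0 ≤ ξ ∧
        {x : Fin n → ℝ | (∀ i, 0 ≤ x i) ∧
          (∑ i ∈ Finset.univ.filter (fun i : Fin n => i ≠ 0), x i) ≤ x 0 ∧ x 0 ≤ ξ} ⊆ Δ}
      = sInf {t : ℝ | 0 ≤ t ∧
          (volume (Δ ∩ {x | x 0 ≤ t})).toReal < t ^ n / n.factorial} := by
  set Sp : ℝ → Set (Fin n → ℝ) := fun ξ => {x : Fin n → ℝ | (∀ i, 0 ≤ x i) ∧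
      (∑ i ∈ Finset.univ.filter (fun i : Fin n => i ≠ 0), x i) ≤ x 0 ∧ x 0 ≤ ξ} with hSp
  set A : Set ℝ := {ξ : ℝ | 0 ≤ ξ ∧ Sp ξ ⊆ Δ} with hA
  have hΔcl : IsClosed Δ := hc.isClosed
  -- Sp 0 = {0}
  have hSp0 : ∀ x ∈ Sp 0, x = 0 := by
    rintro x ⟨hx, hsx, hx0⟩
    have hx00 : x 0 = 0 := le_antisymm hx0 (hx 0)
    have hsum0 : (∑ i ∈ Finset.univ.filter (fun i : Fin n => i ≠ 0), x i) = 0 :=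
      le_antisymm (by rw [← hx00]; exact hsx) (Finset.sum_nonneg fun i _ => hx i)
    have hall := (Finset.sum_eq_zero_iff_of_nonneg fun i _ => hx i).mp hsum0
    funext i
    by_cases h : i = 0
    · rw [h]; exact hx00
    · exact hall i (by simp [h])
  have hA0 : (0:ℝ) ∈ A := by
    refine ⟨le_refl 0, fun x hx => ?_⟩
    rw [hSp0 x hx]; exact h0
  have hAne : A.Nonempty := ⟨0, hA0⟩
  have hAbdd : BddAbove A := by
    refine ⟨μ, fun ξ hξ => ?_⟩
    obtain ⟨hξ0, hsubA⟩ := hξ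
    have hp : (fun i : Fin n => if i = 0 then ξ else 0) ∈ Sp ξ := by
      refine ⟨fun i => ?_, ?_, ?_⟩
      · by_cases h : i = 0 <;> simp [h, hξ0]
      · have : (∑ i ∈ Finset.univ.filter (fun i : Fin n => i ≠ 0),
            (fun i : Fin n => if i = 0 then ξ else 0) i) = 0 := by
          apply Finset.sum_eq_zero
          intro i hi
          simp only [Finset.mem_filter] at hi
          simp [hi.2]
        rw [this]
        simp [hξ0]
      · simp
    have := (hsub (hsubA hp)).2.2
    simpa using this
  set xs : ℝ := sSup A with hxs
  have hxs0 : 0 ≤ xs := le_csSup hAbdd hA0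
  -- A downward closed
  have hdc : ∀ ξ ∈ A, ∀ ζ : ℝ, 0 ≤ ζ → ζ ≤ ξ → ζ ∈ A := by
    rintro ξ ⟨hξ0, hξs⟩ ζ hζ0 hζξ
    exact ⟨hζ0, fun x hx => hξs ⟨hx.1, hx.2.1, hx.2.2.trans hζξ⟩⟩
  have hIco : ∀ ζ : ℝ, 0 ≤ ζ → ζ < xs → ζ ∈ A := by
    intro ζ hζ0 hζ
    obtain ⟨ξ, hξA, hζξ⟩ := exists_lt_of_lt_csSup hAne hζ
    exact hdc ξ hξA ζ hζ0 hζξ.le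
  -- scaling
  have hscale : ∀ (c ξ : ℝ), 0 ≤ c → ∀ x ∈ Sp ξ, c • x ∈ Sp (c * ξ) := by
    rintro c ξ hc x ⟨hx, hsx, hxξ⟩
    have hcoord : ∀ i, (c • x) i = c * x i := fun i => by simp
    refine ⟨fun i => by rw [hcoord i]; exact mul_nonneg hc (hx i), ?_, ?_⟩
    · have : (∑ i ∈ Finset.univ.filter (fun i : Fin n => i ≠ 0), (c • x) i)
          = c * (∑ i ∈ Finset.univ.filter (fun i : Fin n => i ≠ 0), x i) := by
        rw [Finset.mul_sum]
        exact Finset.sum_congr rfl fun i _ => hcoord i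
      rw [this, hcoord 0]
      exact mul_le_mul_of_nonneg_left hsx hc
    · rw [hcoord 0]
      exact mul_le_mul_of_nonneg_left hxξ hc
  -- sup is attained
  have hxsA : xs ∈ A := by
    refine ⟨hxs0, fun x hx => ?_⟩
    rcases eq_or_lt_of_le hxs0 with h | h
    · have : x = 0 := hSp0 x (by rw [← h] at hx; exact hx)
      rw [this]; exact h0
    · apply mem_of_combo_mem hΔcl (y := (0 : Fin n → ℝ))
      intro k
      have hk1 : (0:ℝ) < 1/(k+1) := by positivity
      have hk2 : (1:ℝ)/(k+1) ≤ 1 := by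
        rw [div_le_one (by positivity)]; linarith [Nat.cast_nonneg (α := ℝ) k]
      set c : ℝ := 1 - 1/(k+1) with hcdef
      have hc0 : 0 ≤ c := by rw [hcdef]; linarith
      have hc1 : c < 1 := by rw [hcdef]; linarith
      have hmem : c • x ∈ Sp (c * xs) := hscale c xs hc0 x hx
      have hcxs : c * xs ∈ A := by
        apply hIco _ (mul_nonneg hc0 hxs0)
        calc c * xs < 1 * xs := by exact mul_lt_mul_of_pos_right hc1 h
          _ = xs := one_mul xs
      have : c • x ∈ Δ := hcxs.2 hmem
      simpa [hcdef] using this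
  -- slices are inside the simplex
  have hsubSp : ∀ t : ℝ, Δ ∩ {x | x 0 ≤ t} ⊆ Sp t := by
    rintro t x ⟨hxΔ, hxt⟩
    exact ⟨(hsub hxΔ).1, (hsub hxΔ).2.1, hxt⟩
  have hΔtm : ∀ t : ℝ, MeasurableSet (Δ ∩ {x : Fin n → ℝ | x 0 ≤ t}) :=
    fun t => hΔcl.measurableSet.inter
      (measurableSet_le (measurable_pi_apply 0) measurable_const)
  have hvle : ∀ t : ℝ, 0 ≤ t →
      volume (Δ ∩ {x : Fin n → ℝ | x 0 ≤ t}) ≤ ENNReal.ofReal (t ^ n / n.factorial) :=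
    fun t ht => le_of_le_of_eq (measure_mono (hsubSp t)) (vol_invSimp n t ht)
  -- key forward: containment gives volume equality
  have keyA : ∀ t : ℝ, 0 ≤ t → Sp t ⊆ Δ →
      (volume (Δ ∩ {x : Fin n → ℝ | x 0 ≤ t})).toReal = t ^ n / n.factorial := by
    intro t ht hst
    have hge : ENNReal.ofReal (t ^ n / n.factorial) ≤ volume (Δ ∩ {x : Fin n → ℝ | x 0 ≤ t}) := by
      rw [← vol_invSimp n t ht]
      exact measure_mono fun x hx => ⟨hst hx, hx.2.2⟩
    have heq := le_antisymm (hvle t ht) hge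
    rw [heq, ENNReal.toReal_ofReal (by positivity)]
  -- key backward: volume equality gives containment
  have keyB : ∀ t : ℝ, 0 ≤ t →
      ¬ ((volume (Δ ∩ {x : Fin n → ℝ | x 0 ≤ t})).toReal < t ^ n / n.factorial) →
      Sp t ⊆ Δ := by
    intro t ht hnlt
    rcases eq_or_lt_of_le ht with h | h
    · intro x hx
      rw [hSp0 x (by rw [← h] at hx; exact hx)]
      exact h0
    -- t > 0
    have hfin : volume (Δ ∩ {x : Fin n → ℝ | x 0 ≤ t}) ≠ ⊤ :=
      ne_top_of_le_ne_top ENNReal.ofReal_ne_top (hvle t ht)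
    have htoEq : (volume (Δ ∩ {x : Fin n → ℝ | x 0 ≤ t})).toReal = t ^ n / n.factorial := by
      have h1 : (volume (Δ ∩ {x : Fin n → ℝ | x 0 ≤ t})).toReal ≤ t ^ n / n.factorial := by
        have := ENNReal.toReal_mono ENNReal.ofReal_ne_top (hvle t ht)
        rwa [ENNReal.toReal_ofReal (by positivity)] at this
      linarith [not_lt.mp hnlt]
    have hvolEq : volume (Δ ∩ {x : Fin n → ℝ | x 0 ≤ t}) = ENNReal.ofReal (t ^ n / n.factorial) := by
      rw [← htoEq, ENNReal.ofReal_toReal hfin]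
    have hdiff : volume (Sp t \ (Δ ∩ {x : Fin n → ℝ | x 0 ≤ t})) = 0 := by
      rw [measure_diff (hsubSp t) (hΔtm t).nullMeasurableSet hfin, hvolEq,
        vol_invSimp n t ht, tsub_self]
    have hintC : interior (Sp t) ⊆ Δ ∩ {x : Fin n → ℝ | x 0 ≤ t} := by
      intro x hxint
      by_contra hxC
      have hopen : IsOpen (interior (Sp t) ∩ (Δ ∩ {x : Fin n → ℝ | x 0 ≤ t})ᶜ) :=
        isOpen_interior.inter (hΔcl.inter (isClosed_le (continuous_apply 0)
          continuous_const)).isOpen_compl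
      have hne : (interior (Sp t) ∩ (Δ ∩ {x : Fin n → ℝ | x 0 ≤ t})ᶜ).Nonempty :=
        ⟨x, ⟨hxint, hxC⟩⟩
      have hpos := hopen.measure_pos volume hne
      have hsubdiff : interior (Sp t) ∩ (Δ ∩ {x : Fin n → ℝ | x 0 ≤ t})ᶜ
          ⊆ Sp t \ (Δ ∩ {x : Fin n → ℝ | x 0 ≤ t}) :=
        fun y hy => ⟨interior_subset hy.1, hy.2⟩
      have : volume (interior (Sp t) ∩ (Δ ∩ {x : Fin n → ℝ | x 0 ≤ t})ᶜ) = 0 :=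
        le_antisymm ((measure_mono hsubdiff).trans_eq hdiff) zero_le
      exact hpos.ne' this
    obtain ⟨z, hz⟩ := invSimp_interior_nonempty n (t := t) h
    intro x hx
    apply mem_of_combo_mem hΔcl (y := z)
    intro k
    have hk1 : (0:ℝ) < 1/(k+1) := by positivity
    have hk2 : (1:ℝ)/(k+1) ≤ 1 := by
      rw [div_le_one (by positivity)]; linarith [Nat.cast_nonneg (α := ℝ) k]
    have hcomb : ((1:ℝ)/(k+1)) • z + (1 - (1:ℝ)/(k+1)) • x ∈ interior (Sp t) :=
      (invSimp_convex n t).combo_interior_closure_mem_interior hz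
        (subset_closure hx) hk1 (by linarith) (by ring)
    exact (hintC hcomb).1
  -- concluding: RHS set is Ioi xs
  have hBIoi : {t : ℝ | 0 ≤ t ∧
      (volume (Δ ∩ {x | x 0 ≤ t})).toReal < t ^ n / n.factorial} = Set.Ioi xs := by
    ext t
    simp only [Set.mem_setOf_eq, Set.mem_Ioi]
    constructor
    · rintro ⟨ht0, hlt⟩
      by_contra hle
      push_neg at hle
      have htA : t ∈ A := hdc xs hxsA t ht0 hle
      have := keyA t ht0 htA.2
      rw [this] at hlt
      exact lt_irrefl _ hlt
    · intro hlt
      have ht0 : 0 ≤ t := le_of_lt (lt_of_le_of_lt hxs0 hlt)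
      refine ⟨ht0, ?_⟩
      by_contra hnlt
      have : t ∈ A := ⟨ht0, keyB t ht0 hnlt⟩
      exact absurd (le_csSup hAbdd this) (not_le.mpr hlt)
  rw [hBIoi, csInf_Ioi]
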